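/- arXiv:math/0104178 — 3 statements merged into one kernel-verified Lean document; each statement's English description precedes it below -/
import Mathlib

section
/- Let R be a field and let q ∈ R be a primitive root of unity of order κ ≥ 1. Let M be a q-difference module over R(x); note that Φ_q^κ is R(x)-linear since φ_q^κ is the identity. Then Φ_q^κ = id_M if and only if M is trivial, i.e., there exists an R(x)-basis (e_1, …, e_μ) of M with Φ_q(e_i) = e_i for all i. -/
noncomputable section

variable {R : Type*} [Field R]

/-- The substitution `x ↦ qx` on rational functions (the automorphism `φ_q` of `R(x)`
when `q ≠ 0`). -/
def ratSubst (q : R) (f : RatFunc R) : RatFunc R :=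
  algebraMap (Polynomial R) (RatFunc R) (f.num.comp (Polynomial.C q * Polynomial.X)) /
    algebraMap (Polynomial R) (RatFunc R) (f.denom.comp (Polynomial.C q * Polynomial.X))

/-! The substitution `φ_q` generates a cyclic group of order `κ` acting on `R(x)`, and the
statement is Galois descent for it. If `Φ^κ = 1`, every twisted trace `∑_{i<κ} φ_q^i(c) Φ^i(m)` is
fixed by `Φ`. A linear form `λ` vanishing on all fixed vectors then satisfies
`∑_{i<κ} λ(Φ^i m) φ_q^i = 0`, so `λ = 0` by Dedekind's independence of the distinct characters
`φ_q^i`; hence the fixed vectors span `M` and contain a basis. Conversely, `Φ^κ` is linear because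
`φ_q^κ = 1`, so it is the identity as soon as it fixes a basis. -/

open Finset Submodule

section SemilinearDescent

variable {K M : Type*} [Field K] [AddCommGroup M] [Module K M]

def IsSemilinear (σ : K →+* K) (Φ : AddMonoid.End M) : Prop :=
  ∀ (c : K) (m : M), Φ (c • m) = σ c • Φ m

variable {σ : K →+* K} {Φ : AddMonoid.End M}

theorem IsSemilinear.pow (hΦ : IsSemilinear σ Φ) (n : ℕ) : IsSemilinear (σ ^ n) (Φ ^ n) := by
  induction n with
  | zero => simp [IsSemilinear]
  | succ n ih =>
    intro c m
    simp only [pow_succ', AddMonoid.End.coe_mul, RingHom.coe_mul, Function.comp_apply, ih c m]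
    exact hΦ _ _

theorem IsSemilinear.sum_pow_smul_pow_mem_fixedPoints (hΦ : IsSemilinear σ Φ) {n : ℕ}
    (hσ : σ ^ n = 1) (hΦn : Φ ^ n = 1) (c : K) (m : M) :
    ∑ i ∈ range n, (σ ^ i) c • (Φ ^ i) m ∈ Function.fixedPoints Φ := by
  set g : ℕ → M := fun i ↦ (σ ^ i) c • (Φ ^ i) m
  have hshift : ∀ i, Φ (g i) = g (i + 1) := fun i ↦ by
    simp only [g, hΦ _ _, pow_succ', RingHom.coe_mul, AddMonoid.End.coe_mul, Function.comp_apply]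
  have hperiod : g n = g 0 := by simp only [g, hσ, hΦn, pow_zero]
  calc Φ (∑ i ∈ range n, g i) = ∑ i ∈ range n, g (i + 1) := by simp only [map_sum, hshift]
    _ = ∑ i ∈ range n, g i :=
      add_right_cancel (b := g 0) <| by rw [← sum_range_succ', sum_range_succ, hperiod]

theorem eq_zero_of_forall_sum_mul_pow_apply_eq_zero {a : ℕ → K}
    (h : ∀ c, ∑ i ∈ range (orderOf σ), a i * (σ ^ i) c = 0) {i : ℕ} (hi : i < orderOf σ) :
    a i = 0 := by
  have hinj : Function.Injective fun j : Fin (orderOf σ) ↦ ((σ ^ (j : ℕ) : K →+* K) : K →* K) :=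
    fun j k hjk ↦ Fin.ext <| pow_injOn_Iio_orderOf j.2 k.2 <| RingHom.coe_monoidHom_injective hjk
  have hli := (linearIndependent_monoidHom K K).comp _ hinj
  refine Fintype.linearIndependent_iff.1 hli (fun j ↦ a j) (funext fun c ↦ ?_) ⟨i, hi⟩
  simpa [sum_range] using h c

theorem IsSemilinear.span_fixedPoints_eq_top (hΦ : IsSemilinear σ Φ) (hσ : 0 < orderOf σ)
    (hΦn : Φ ^ orderOf σ = 1) : span K (Function.fixedPoints Φ) = ⊤ := by
  by_contra hne
  obtain ⟨f, hf0, hf⟩ := exists_le_ker_of_lt_top _ (lt_top_iff_ne_top.2 hne)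
  refine hf0 (LinearMap.ext fun m ↦ ?_)
  refine eq_zero_of_forall_sum_mul_pow_apply_eq_zero (a := fun i ↦ f ((Φ ^ i) m)) (fun c ↦ ?_) hσ
  have := hf (subset_span (hΦ.sum_pow_smul_pow_mem_fixedPoints (pow_orderOf_eq_one σ) hΦn c m))
  simpa [map_sum, mul_comm] using this

theorem exists_finBasis_forall_mem_of_span_eq_top [FiniteDimensional K M] {s : Set M}
    (hs : span K s = ⊤) : ∃ (n : ℕ) (b : Module.Basis (Fin n) K M), ∀ i, b i ∈ s := by
  let b := Module.Basis.ofSpan hs.ge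
  have := FiniteDimensional.fintypeBasisIndex b
  refine ⟨_, b.reindex (Fintype.equivFin _), fun i ↦ Module.Basis.ofSpan_subset hs.ge ?_⟩
  simp only [Module.Basis.reindex_apply, Set.mem_range_self, b]

theorem IsSemilinear.pow_eq_one_of_apply_basis_eq {ι : Type*} (hΦ : IsSemilinear σ Φ)
    (b : Module.Basis ι K M) (hb : ∀ i, Φ (b i) = b i) {n : ℕ} (hσ : σ ^ n = 1) : Φ ^ n = 1 := by
  let L : M →ₗ[K] M :=
    { toFun := ⇑(Φ ^ n)
      map_add' := map_add _
      map_smul' := fun c m ↦ by simpa [hσ] using hΦ.pow n c m }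
  have hL : L = LinearMap.id := b.ext fun i ↦ by simp [L, Function.iterate_fixed (hb i)]
  ext m
  exact LinearMap.congr_fun hL m

end SemilinearDescent

open Polynomial

theorem Polynomial.compRingHom_C_mul_X_injective {S : Type*} [CommRing S] {r : S}
    (hr : r ∈ nonZeroDivisors S) : Function.Injective (compRingHom (C r * X)) :=
  (injective_iff_map_eq_zero _).2 fun _ ↦ (comp_C_mul_X_eq_zero_iff hr).1

def ratSubstRingHom (u : Rˣ) : RatFunc R →+* RatFunc R :=
  RatFunc.liftRingHom ((algebraMap R[X] (RatFunc R)).comp (compRingHom (C (u : R) * X)))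
    (nonZeroDivisors_le_comap_nonZeroDivisors_of_injective _ <| (RatFunc.algebraMap_injective R).comp
      (compRingHom_C_mul_X_injective u.isUnit.mem_nonZeroDivisors))

theorem ratSubstRingHom_algebraMap (u : Rˣ) (p : R[X]) :
    ratSubstRingHom u (algebraMap R[X] (RatFunc R) p) =
      algebraMap R[X] (RatFunc R) (p.comp (C (u : R) * X)) := by
  rw [ratSubstRingHom, ← div_one (algebraMap _ _ p), ← map_one (algebraMap R[X] (RatFunc R)),
    RatFunc.liftRingHom_apply_div]
  simp

def ratSubstHom : Rˣ →* (RatFunc R →+* RatFunc R) where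
  toFun := ratSubstRingHom
  map_one' := IsFractionRing.ringHom_ext (A := R[X]) fun p ↦ by
    simp [ratSubstRingHom_algebraMap]
  map_mul' u v := IsFractionRing.ringHom_ext (A := R[X]) fun p ↦ by
    simp only [RingHom.coe_mul, Function.comp_apply, ratSubstRingHom_algebraMap,
      comp_assoc, mul_comp, C_comp, X_comp, Units.val_mul, C_mul]
    ring_nf

theorem ratSubst_eq_ratSubstHom (u : Rˣ) (f : RatFunc R) :
    ratSubst (u : R) f = ratSubstHom u f := by
  rw [ratSubstHom, MonoidHom.coe_mk, OneHom.coe_mk, ratSubstRingHom, RatFunc.liftRingHom_apply]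
  rfl

theorem ratSubstHom_injective :
    Function.Injective (ratSubstHom : Rˣ →* (RatFunc R →+* RatFunc R)) := by
  intro u v h
  have hX := congr($h (algebraMap R[X] (RatFunc R) X))
  simp only [ratSubstHom, MonoidHom.coe_mk, OneHom.coe_mk, ratSubstRingHom_algebraMap, X_comp] at hX
  have hC : C (u : R) = C (v : R) := mul_right_cancel₀ X_ne_zero (RatFunc.algebraMap_injective R hX)
  exact Units.ext (C_injective hC)

theorem q_difference_module_trivial_iff_phi_pow_kappa_eq_id_general
    {R : Type*} [Field R] (q : R) (κ : ℕ) (hκpos : 0 < κ)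
    (hqκ : q ^ κ = 1) (hqmin : ∀ m : ℕ, 0 < m → m < κ → q ^ m ≠ 1)
    (M : Type*) [AddCommGroup M] [Module (RatFunc R) M] [FiniteDimensional (RatFunc R) M]
    (Φ : M → M)
    (hΦadd : ∀ m m' : M, Φ (m + m') = Φ m + Φ m')
    (hΦsemi : ∀ (f : RatFunc R) (m : M), Φ (f • m) = ratSubst q f • Φ m) :
    (∀ m : M, Φ^[κ] m = m) ↔
      ∃ (n : ℕ) (b : Module.Basis (Fin n) (RatFunc R) M), ∀ i : Fin n, Φ (b i) = b i := by
  have hq : IsPrimitiveRoot q κ := .mk_of_lt q hκpos hqκ hqmin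
  obtain ⟨u, rfl⟩ := hq.isUnit hκpos.ne'
  have hσ : orderOf (ratSubstHom u) = κ := by
    rw [orderOf_injective _ ratSubstHom_injective, ← orderOf_units, hq.eq_orderOf]
  let Ψ : AddMonoid.End M := AddMonoidHom.mk' Φ hΦadd
  have hΨ : IsSemilinear (ratSubstHom u) Ψ := fun f m ↦ by
    rw [← ratSubst_eq_ratSubstHom]
    exact hΦsemi f m
  rw [show (∀ m, Φ^[κ] m = m) ↔ Ψ ^ κ = 1 from (DFunLike.ext_iff (f := Ψ ^ κ) (g := 1)).symm]
  constructor
  · intro hΨκ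
    rw [← hσ] at hκpos hΨκ
    exact exists_finBasis_forall_mem_of_span_eq_top (hΨ.span_fixedPoints_eq_top hκpos hΨκ)
  · rintro ⟨n, b, hb⟩
    exact hΨ.pow_eq_one_of_apply_basis_eq b hb (hσ ▸ pow_orderOf_eq_one _)

/-- For `q` a primitive root of unity of order `κ`, a `q`-difference module over `R(x)`
is trivial iff `Φ_q^κ` is the identity. -/
theorem q_difference_module_trivial_iff_phi_pow_kappa_eq_id
    {R : Type*} [Field R] (q : R) (κ : ℕ) (hκpos : 0 < κ)
    (hqκ : q ^ κ = 1) (hqmin : ∀ m : ℕ, 0 < m → m < κ → q ^ m ≠ 1)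
    (M : Type*) [AddCommGroup M] [Module (RatFunc R) M] [FiniteDimensional (RatFunc R) M]
    (Φ : M → M) (hΦbij : Function.Bijective Φ)
    (hΦadd : ∀ m m' : M, Φ (m + m') = Φ m + Φ m')
    (hΦsemi : ∀ (f : RatFunc R) (m : M), Φ (f • m) = ratSubst q f • Φ m) :
    (∀ m : M, Φ^[κ] m = m) ↔
      ∃ (n : ℕ) (b : Module.Basis (Fin n) (RatFunc R) M), ∀ i : Fin n, Φ (b i) = b i :=
  q_difference_module_trivial_iff_phi_pow_kappa_eq_id_general q κ hκpos hqκ hqmin M Φ hΦadd hΦsemi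
end
end

section
/- Let R be a field and let q ∈ R be a primitive root of unity of order κ ≥ 1. Let M be a q-difference module over R(x); note that Φ_q^κ is R(x)-linear since φ_q^κ is the identity. Then Φ_q^κ is unipotent (i.e., Φ_q^κ − id_M is a nilpotent R(x)-linear endomorphism) if and only if M is an iterated extension of trivial q-difference modules: there exists a chain of Φ_q-stable R(x)-subspaces 0 = M_0 ⊆ M_1 ⊆ ⋯ ⊆ M_l = M such that for each i = 1, …, l the quotient M_i/M_{i−1}, with the operator induced by Φ_q, admits a basis of vectors fixed by the induced operator. -/
/-!
Since `φ_q` has order `κ`, `Φ_q^κ` is linear. If `M` carries a filtration with trivial graded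
pieces, `Φ_q^κ - 1` lowers it by one step, hence is nilpotent. Conversely, let `Φ_q^κ - 1` be
nilpotent and `P` a proper `Φ_q`-stable subspace. Nilpotency yields `u ∉ P` with `Φ_q^κ u ≡ u`
modulo `P`; every twisted trace `∑_{i<κ} φ_q^i(a) Φ_q^i u` is then `Φ_q`-fixed modulo `P`, and by
Dedekind's independence of the characters `φ_q^i` (`i < κ`) one of them lies outside `P`.
Adjoining it to `P` and repeating builds the filtration one line at a time.
-/

noncomputable section

variable {R : Type*} [Field R]

open Finset Set Polynomial

theorem Module.End.isNilpotent_iff_exists_iterate_eq_zero {R N : Type*} [Semiring R]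
    [AddCommMonoid N] [Module R N] (f : Module.End R N) :
    IsNilpotent f ↔ ∃ n : ℕ, ∀ m, f^[n] m = 0 := by
  simp only [IsNilpotent, LinearMap.ext_iff, Module.End.coe_pow, LinearMap.zero_apply]

theorem Module.End.exists_notMem_apply_mem_of_isNilpotent {R N : Type*} [Semiring R]
    [AddCommMonoid N] [Module R N] {f : Module.End R N} (hf : IsNilpotent f)
    {P : Submodule R N} (hP : P ≠ ⊤) : ∃ u ∉ P, f u ∈ P := by
  have descend (k : ℕ) : ∀ m ∉ P, (f ^ k) m ∈ P → ∃ u ∉ P, f u ∈ P := by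
    induction k with
    | zero => intro m hm hk; exact absurd hk hm
    | succ k ih =>
      intro m hm hk
      by_cases hfm : f m ∈ P
      · exact ⟨m, hm, hfm⟩
      · exact ih (f m) hfm (by rwa [← Module.End.mul_apply, ← pow_succ])
  obtain ⟨m, -, hm⟩ := SetLike.exists_of_lt hP.lt_top
  obtain ⟨k, hk⟩ := hf
  exact descend k m hm (by rw [hk]; exact P.zero_mem)

section SemilinearDescent

variable {K M : Type*} [Field K] [AddCommGroup M] [Module K M] {σ : K →+* K}

/-- The images of `v` form a basis of `Q ⧸ P` made of vectors fixed by the map induced by `Φ`. -/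
def IsTrivialExtension (Φ : M → M) (P Q : Submodule K M) : Prop :=
  ∃ (n : ℕ) (v : Fin n → M),
    (∀ j, v j ∈ Q) ∧
    (∀ j, Φ (v j) - v j ∈ P) ∧
    (∀ m ∈ Q, ∃ (c : Fin n → K) (w : M), w ∈ P ∧ m = w + ∑ j, c j • v j) ∧
    (∀ c : Fin n → K, (∑ j, c j • v j) ∈ P → ∀ j, c j = 0)

def IsTrivialFiltration (Φ : M → M) (l : ℕ) (W : ℕ → Submodule K M) : Prop :=
  (∀ i, W i ≤ W (i + 1)) ∧ (∀ i, MapsTo Φ (W i) (W i)) ∧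
    ∀ i < l, IsTrivialExtension Φ (W i) (W (i + 1))

theorem IsTrivialFiltration.cons {Φ : M → M} {l : ℕ} {W : ℕ → Submodule K M}
    {P : Submodule K M} (hW : IsTrivialFiltration Φ l W) (hPW : P ≤ W 0) (hP : MapsTo Φ P P)
    (hext : IsTrivialExtension Φ P (W 0)) :
    IsTrivialFiltration Φ (l + 1) fun | 0 => P | i + 1 => W i :=
  ⟨fun | 0 => hPW | i + 1 => hW.1 i, fun | 0 => hP | i + 1 => hW.2.1 i,
    fun | 0, _ => hext | i + 1, hi => hW.2.2 i (Nat.lt_of_succ_lt_succ hi)⟩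

namespace LinearMap

theorem iterate_map_smulₛₗ (Φ : M →ₛₗ[σ] M) (n : ℕ) (a : K) (m : M) :
    Φ^[n] (a • m) = (σ ^ n) a • Φ^[n] m := by
  induction n with
  | zero => rfl
  | succ n ih =>
    rw [Function.iterate_succ_apply', ih, map_smulₛₗ, pow_succ', RingHom.mul_def,
      RingHom.comp_apply, Function.iterate_succ_apply']

def iterateOfPowEqOne (Φ : M →ₛₗ[σ] M) {n : ℕ} (hn : σ ^ n = 1) : Module.End K M where
  toFun := Φ^[n]
  map_add' := iterate_map_add Φ n
  map_smul' a m := by rw [iterate_map_smulₛₗ, hn]; rfl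

end LinearMap

theorem iterate_sub_self_mem (Φ : M →ₛₗ[σ] M) {P : Submodule K M} (hP : MapsTo Φ P P) {v : M}
    (hv : Φ v - v ∈ P) (n : ℕ) : Φ^[n] v - v ∈ P := by
  induction n with
  | zero => simp
  | succ n ih =>
    have h : Φ^[n + 1] v - v = Φ (Φ^[n] v - v) + (Φ v - v) := by
      rw [Function.iterate_succ_apply', map_sub]; abel
    rw [h]
    exact P.add_mem (hP ih) hv

theorem IsTrivialExtension.iterateOfPowEqOne_sub_one_mem (Φ : M →ₛₗ[σ] M) {n : ℕ}
    (hn : σ ^ n = 1) {P Q : Submodule K M} (hPQ : IsTrivialExtension Φ P Q) (hP : MapsTo Φ P P)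
    {m : M} (hm : m ∈ Q) : (Φ.iterateOfPowEqOne hn - 1) m ∈ P := by
  obtain ⟨k, v, -, hv, hspan, -⟩ := hPQ
  obtain ⟨c, w, hw, rfl⟩ := hspan m hm
  rw [map_add, map_sum]
  refine P.add_mem (P.sub_mem (hP.iterate n hw) hw) (P.sum_mem fun j _ => ?_)
  rw [map_smul]
  exact P.smul_mem _ (iterate_sub_self_mem Φ hP (hv j) n)

theorem IsTrivialFiltration.iterateOfPowEqOne_sub_one_pow_eq_zero (Φ : M →ₛₗ[σ] M) {n : ℕ}
    (hn : σ ^ n = 1) {l : ℕ} {W : ℕ → Submodule K M} (hW : IsTrivialFiltration Φ l W)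
    (h0 : W 0 = ⊥) (hl : W l = ⊤) : (Φ.iterateOfPowEqOne hn - 1) ^ l = 0 := by
  have hvanish : ∀ i ≤ l, ∀ m ∈ W i, ((Φ.iterateOfPowEqOne hn - 1) ^ i) m = 0 := by
    intro i
    induction i with
    | zero => intro _ m hm; simpa [h0] using hm
    | succ i ih =>
      intro hi m hm
      rw [pow_succ, Module.End.mul_apply]
      exact ih (by omega) _
        ((hW.2.2 i (by omega)).iterateOfPowEqOne_sub_one_mem Φ hn (hW.2.1 i) hm)
  ext m
  exact hvanish l le_rfl m (hl ▸ Submodule.mem_top)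

theorem linearIndependent_coe_pow (σ : K →+* K) :
    LinearIndependent K fun i : Fin (orderOf σ) => ⇑(σ ^ (i : ℕ)) := by
  have hinj :
      Function.Injective fun i : Fin (orderOf σ) => ((σ ^ (i : ℕ) : K →+* K) : K →* K) :=
    fun i j hij =>
      Fin.ext (pow_injOn_Iio_orderOf i.isLt j.isLt (RingHom.coe_monoidHom_injective hij))
  exact (linearIndependent_monoidHom K K).comp _ hinj

def twistedTrace (Φ : M →ₛₗ[σ] M) (n : ℕ) (u : M) (a : K) : M :=
  ∑ i ∈ range n, (σ ^ i) a • Φ^[i] u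

theorem apply_twistedTrace_sub (Φ : M →ₛₗ[σ] M) {n : ℕ} (hn : σ ^ n = 1) (u : M) (a : K) :
    Φ (twistedTrace Φ n u a) - twistedTrace Φ n u a = a • (Φ^[n] u - u) := by
  have shift : Φ (twistedTrace Φ n u a) = ∑ i ∈ range n, (σ ^ (i + 1)) a • Φ^[i + 1] u := by
    simp only [twistedTrace, map_sum, map_smulₛₗ, pow_succ', RingHom.mul_def, RingHom.comp_apply,
      Function.iterate_succ_apply']
  have telescope := sum_range_succ' (fun i => (σ ^ i) a • Φ^[i] u) n
  rw [sum_range_succ, hn] at telescope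
  simp only [pow_zero, RingHom.coe_one, Function.iterate_zero, id_eq] at telescope
  rw [shift, twistedTrace, smul_sub, sub_eq_sub_iff_add_eq_add, add_comm (a • _), telescope]

theorem exists_notMem_apply_sub_mem (Φ : M →ₛₗ[σ] M) (hσ : 0 < orderOf σ) {P : Submodule K M}
    {u : M} (hu : u ∉ P) (hfix : Φ^[orderOf σ] u - u ∈ P) : ∃ v ∉ P, Φ v - v ∈ P := by
  by_contra! h
  have htrace (a : K) : twistedTrace Φ (orderOf σ) u a ∈ P := by
    by_contra hnot
    refine h _ hnot ?_
    rw [apply_twistedTrace_sub Φ (pow_orderOf_eq_one σ)]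
    exact P.smul_mem a hfix
  obtain ⟨f, hfu, hfP⟩ := P.exists_dual_map_eq_bot_of_notMem hu inferInstance
  have hrel : ∑ i : Fin (orderOf σ), f (Φ^[i] u) • ⇑(σ ^ (i : ℕ)) = 0 := by
    funext a
    have := (Submodule.mem_bot K).mp (hfP ▸ Submodule.mem_map_of_mem (htrace a))
    simpa [twistedTrace, Finset.sum_range, mul_comm] using this
  have hcoeff := Fintype.linearIndependent_iff.mp (linearIndependent_coe_pow σ) _ hrel ⟨0, hσ⟩
  exact hfu (by simpa using hcoeff)

theorem mapsTo_sup_span_singleton (Φ : M →ₛₗ[σ] M) {P : Submodule K M} (hP : MapsTo Φ P P)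
    {v : M} (hv : Φ v - v ∈ P) :
    MapsTo Φ ((P ⊔ K ∙ v : Submodule K M) : Set M) (P ⊔ K ∙ v : Submodule K M) := by
  intro m hm
  obtain ⟨p, hp, w, hw, rfl⟩ := Submodule.mem_sup.mp hm
  obtain ⟨c, rfl⟩ := Submodule.mem_span_singleton.mp hw
  refine Submodule.mem_sup.mpr ⟨Φ p + σ c • (Φ v - v), P.add_mem (hP hp) (P.smul_mem _ hv),
    σ c • v, Submodule.smul_mem _ _ (Submodule.mem_span_singleton_self v), ?_⟩
  rw [map_add, map_smulₛₗ]
  module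

theorem isTrivialExtension_sup_span_singleton (Φ : M → M) {P : Submodule K M} {v : M}
    (hvP : v ∉ P) (hv : Φ v - v ∈ P) : IsTrivialExtension Φ P (P ⊔ K ∙ v) := by
  refine ⟨1, fun _ => v, fun _ => Submodule.mem_sup_right (Submodule.mem_span_singleton_self v),
    fun _ => hv, fun m hm => ?_, fun c hc j => ?_⟩
  · obtain ⟨p, hp, w, hw, rfl⟩ := Submodule.mem_sup.mp hm
    obtain ⟨c, rfl⟩ := Submodule.mem_span_singleton.mp hw
    exact ⟨fun _ => c, p, hp, by simp⟩
  · rw [Fin.sum_univ_one] at hc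
    rw [Subsingleton.elim j 0]
    by_contra hc0
    exact hvP ((P.smul_mem_iff hc0).mp hc)

theorem exists_isTrivialFiltration_of_isNilpotent [FiniteDimensional K M] (Φ : M →ₛₗ[σ] M)
    (hσ : 0 < orderOf σ) (hΦ : IsNilpotent (Φ.iterateOfPowEqOne (pow_orderOf_eq_one σ) - 1))
    (P : Submodule K M) (hP : MapsTo Φ P P) :
    ∃ (l : ℕ) (W : ℕ → Submodule K M), W 0 = P ∧ W l = ⊤ ∧ IsTrivialFiltration Φ l W := by
  induction P using WellFoundedGT.induction with
  | _ P ih =>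
  by_cases htop : P = ⊤
  · exact ⟨0, fun _ => P, rfl, htop, fun _ => le_rfl, fun _ => hP,
      fun i hi => absurd hi i.not_lt_zero⟩
  obtain ⟨u, hu, hDu⟩ := Module.End.exists_notMem_apply_mem_of_isNilpotent hΦ htop
  obtain ⟨v, hvP, hv⟩ := exists_notMem_apply_sub_mem Φ hσ hu hDu
  have hlt : P < P ⊔ K ∙ v :=
    SetLike.lt_iff_le_and_exists.mpr ⟨le_sup_left, v, Submodule.mem_sup_right
      (Submodule.mem_span_singleton_self v), hvP⟩
  obtain ⟨l, W, hW0, hWl, hW⟩ := ih _ hlt (mapsTo_sup_span_singleton Φ hP hv)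
  refine ⟨l + 1, _, rfl, hWl, hW.cons (hW0 ▸ hlt.le) hP ?_⟩
  rw [hW0]
  exact isTrivialExtension_sup_span_singleton Φ hvP hv

theorem isNilpotent_iterateOfPowEqOne_sub_one_iff [FiniteDimensional K M] (Φ : M →ₛₗ[σ] M)
    (hσ : 0 < orderOf σ) :
    IsNilpotent (Φ.iterateOfPowEqOne (pow_orderOf_eq_one σ) - 1) ↔
      ∃ (l : ℕ) (W : ℕ → Submodule K M), W 0 = ⊥ ∧ W l = ⊤ ∧ IsTrivialFiltration Φ l W := by
  refine ⟨fun h => exists_isTrivialFiltration_of_isNilpotent Φ hσ h ⊥ fun m hm => ?_,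
    fun ⟨l, W, h0, hl, hW⟩ => ⟨l, hW.iterateOfPowEqOne_sub_one_pow_eq_zero Φ _ h0 hl⟩⟩
  rw [(Submodule.mem_bot K).mp hm, map_zero]
  exact Submodule.zero_mem _

end SemilinearDescent

section QSubstitution

theorem nonZeroDivisors_le_comap_compRingHom_C_mul_X (q : Rˣ) :
    nonZeroDivisors R[X] ≤ (nonZeroDivisors R[X]).comap (compRingHom (C (q : R) * X)) :=
  fun _ hp => Submonoid.mem_comap.mpr <| mem_nonZeroDivisors_of_ne_zero <|
    (comp_C_mul_X_eq_zero_iff q.isUnit.mem_nonZeroDivisors).not.mpr (nonZeroDivisors.ne_zero hp)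

def qSubst (q : Rˣ) : RatFunc R →+* RatFunc R :=
  RatFunc.mapRingHom (compRingHom (C (q : R) * X))
    (nonZeroDivisors_le_comap_compRingHom_C_mul_X q)

theorem qSubst_apply (q : Rˣ) (f : RatFunc R) : qSubst q f = ratSubst (q : R) f :=
  RatFunc.map_apply _ (nonZeroDivisors_le_comap_compRingHom_C_mul_X q) f

theorem qSubst_algebraMap (q : Rˣ) (p : R[X]) :
    qSubst q (algebraMap _ _ p) = algebraMap _ _ (p.comp (C (q : R) * X)) := by
  simp [qSubst_apply, ratSubst, RatFunc.num_algebraMap, RatFunc.denom_algebraMap]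

theorem qSubst_C (q : Rˣ) (a : R) : qSubst q (RatFunc.C a) = RatFunc.C a := by
  rw [← RatFunc.algebraMap_C, qSubst_algebraMap, C_comp]

theorem qSubst_X (q : Rˣ) : qSubst q RatFunc.X = RatFunc.C (q : R) * RatFunc.X := by
  rw [← RatFunc.algebraMap_X, qSubst_algebraMap, X_comp, map_mul, RatFunc.algebraMap_C]

def qSubstHom : Rˣ →* (RatFunc R →+* RatFunc R) where
  toFun := qSubst
  map_one' := IsLocalization.ringHom_ext (nonZeroDivisors R[X]) <| ringHom_ext
    (fun a => by simp [qSubst_C]) (by simp [qSubst_X])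
  map_mul' a b := IsLocalization.ringHom_ext (nonZeroDivisors R[X]) <| ringHom_ext
    (fun c => by simp [qSubst_C]) (by simp [qSubst_X, qSubst_C, mul_left_comm, mul_assoc])

theorem qSubstHom_injective : Function.Injective (qSubstHom (R := R)) := by
  intro a b h
  have hX := congr($h RatFunc.X)
  simp only [qSubstHom, MonoidHom.coe_mk, OneHom.coe_mk, qSubst_X] at hX
  exact Units.ext (RatFunc.C_injective (mul_right_cancel₀ RatFunc.X_ne_zero hX))

theorem orderOf_qSubst (q : Rˣ) : orderOf (qSubst q) = orderOf (q : R) := by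
  rw [orderOf_units]
  exact orderOf_injective qSubstHom qSubstHom_injective q

end QSubstitution

theorem q_difference_module_unipotent_iff_iterated_extension_of_trivial_general
    {R : Type*} [Field R] (q : R) (κ : ℕ) (hκpos : 0 < κ)
    (hqκ : q ^ κ = 1) (hqmin : ∀ m : ℕ, 0 < m → m < κ → q ^ m ≠ 1)
    (M : Type*) [AddCommGroup M] [Module (RatFunc R) M] [FiniteDimensional (RatFunc R) M]
    (Φ : M → M)
    (hΦadd : ∀ m m' : M, Φ (m + m') = Φ m + Φ m')
    (hΦsemi : ∀ (f : RatFunc R) (m : M), Φ (f • m) = ratSubst q f • Φ m) :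
    (∃ N : ℕ, ∀ m : M, (fun x : M => Φ^[κ] x - x)^[N] m = 0) ↔
      ∃ (l : ℕ) (W : ℕ → Submodule (RatFunc R) M),
        W 0 = ⊥ ∧ W l = ⊤ ∧ (∀ i : ℕ, W i ≤ W (i + 1)) ∧
        (∀ i : ℕ, ∀ m ∈ W i, Φ m ∈ W i) ∧
        ∀ i < l, ∃ (n : ℕ) (v : Fin n → M),
          (∀ j, v j ∈ W (i + 1)) ∧
          (∀ j, Φ (v j) - v j ∈ W i) ∧
          (∀ m ∈ W (i + 1), ∃ (c : Fin n → RatFunc R) (w : M),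
            w ∈ W i ∧ m = w + ∑ j, c j • v j) ∧
          (∀ c : Fin n → RatFunc R, (∑ j, c j • v j) ∈ W i → ∀ j, c j = 0) := by
  obtain ⟨u, rfl⟩ : IsUnit q := IsUnit.of_pow_eq_one hqκ hκpos.ne'
  have horder : orderOf (qSubst u) = κ := by
    rw [orderOf_qSubst, orderOf_eq_iff hκpos]
    exact ⟨hqκ, fun m hm h0 => hqmin m h0 hm⟩
  let Ψ : M →ₛₗ[qSubst u] M :=
    { toFun := Φ
      map_add' := hΦadd
      map_smul' := fun f m => by rw [hΦsemi, qSubst_apply] }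
  subst horder
  exact (Module.End.isNilpotent_iff_exists_iterate_eq_zero _).symm.trans
    (isNilpotent_iterateOfPowEqOne_sub_one_iff Ψ hκpos)

/-- For `q` a primitive root of unity of order `κ`, `Φ_q^κ` is unipotent iff the
`q`-difference module is an iterated extension of trivial `q`-difference modules. -/
theorem q_difference_module_unipotent_iff_iterated_extension_of_trivial
    {R : Type*} [Field R] (q : R) (κ : ℕ) (hκpos : 0 < κ)
    (hqκ : q ^ κ = 1) (hqmin : ∀ m : ℕ, 0 < m → m < κ → q ^ m ≠ 1)
    (M : Type*) [AddCommGroup M] [Module (RatFunc R) M] [FiniteDimensional (RatFunc R) M]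
    (Φ : M → M) (hΦbij : Function.Bijective Φ)
    (hΦadd : ∀ m m' : M, Φ (m + m') = Φ m + Φ m')
    (hΦsemi : ∀ (f : RatFunc R) (m : M), Φ (f • m) = ratSubst q f • Φ m) :
    (∃ N : ℕ, ∀ m : M, (fun x : M => Φ^[κ] x - x)^[N] m = 0) ↔
      ∃ (l : ℕ) (W : ℕ → Submodule (RatFunc R) M),
        W 0 = ⊥ ∧ W l = ⊤ ∧ (∀ i : ℕ, W i ≤ W (i + 1)) ∧
        (∀ i : ℕ, ∀ m ∈ W i, Φ m ∈ W i) ∧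
        ∀ i < l, ∃ (n : ℕ) (v : Fin n → M),
          (∀ j, v j ∈ W (i + 1)) ∧
          (∀ j, Φ (v j) - v j ∈ W i) ∧
          (∀ m ∈ W (i + 1), ∃ (c : Fin n → RatFunc R) (w : M),
            w ∈ W i ∧ m = w + ∑ j, c j • v j) ∧
          (∀ c : Fin n → RatFunc R, (∑ j, c j • v j) ∈ W i → ∀ j, c j = 0) :=
  q_difference_module_unipotent_iff_iterated_extension_of_trivial_general q κ hκpos hqκ hqmin M Φ
    hΦadd hΦsemi
end
end

section
/- Let q ∈ ℂ^× not be a root of unity and let a, b, c ∈ ℂ be such that neither a = c = 0 nor b = c = 0. Consider the basic hypergeometric q-difference equation (H_{a,b,c}): (abx − cq^{−1})·y(q²x) − ((a+b)x − (1 + cq^{−1}))·y(qx) + (x − 1)·y(x) = 0, for y ∈ ℂ(x). Then (H_{a,b,c}) has two solutions in ℂ(x) that are linearly independent over ℂ if and only if the following conditions hold: there exist integers α, β, γ with a = q^α, b = q^β, c = q^γ; and, setting 𝒵 = (ℤ_{>0}×ℤ_{≤0}) ∪ (ℤ_{≤0}×ℤ_{>0}), one has ((α, α+1−γ) ∈ 𝒵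 or (β, β+1−γ) ∈ 𝒵), and ((α, β) ∈ 𝒵 or (α+1−γ, β+1−γ) ∈ 𝒵). -/
noncomputable section

variable {R : Type*} [Field R]

/-- The basic hypergeometric `q`-difference equation `(H_{a,b,c})`. -/
def basicHypergeometricEq (q a b c : ℂ) (y : RatFunc ℂ) : Prop :=
  (RatFunc.C (a * b) * RatFunc.X - RatFunc.C (c * q⁻¹)) * ratSubst (q ^ 2) y
      - (RatFunc.C (a + b) * RatFunc.X - RatFunc.C (1 + c * q⁻¹)) * ratSubst q y
      + (RatFunc.X - 1) * y = 0

/-- The set 𝒵 = (ℤ_{>0} × ℤ_{≤0}) ∪ (ℤ_{≤0} × ℤ_{>0}). -/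
def zSet : Set (ℤ × ℤ) := {z | (0 < z.1 ∧ z.2 ≤ 0) ∨ (z.1 ≤ 0 ∧ 0 < z.2)}

/-!
Expanding `y ∈ ℂ(x)` at `0` as `∑ dₙ xⁿ` turns `(H_{a,b,c})` into the two-term recurrence
`(1 - qⁿ)(1 - c qⁿ⁻¹) dₙ = (1 - a qⁿ⁻¹)(1 - b qⁿ⁻¹) dₙ₋₁`, and the coefficients of the expansion
at `∞` satisfy the same recurrence. A nonzero solution starts at a zero of the left-hand factor,
so two independent solutions force that factor to have two zeros `m₁ < m₂` (that is, `c = q^γ`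
with `γ ≠ 1`), and the coefficients of a solution at `m₁` and `m₂` can then be prescribed freely.
The solution with `d_{m₁} = 1`, `d_{m₂} = 0` stops inside `(m₁, m₂]`, which needs a zero of the
right-hand factor there. The solution with `d_{m₂} = 1` either stops after `m₂`, or never stops;
in the latter case its expansion at `∞`, read downwards from `m₁`, must stop, which needs a zero
`≤ m₁`. Conversely, for these patterns of zeros the terminating solutions are Laurent
polynomials, and the non-terminating one is a rational function whose coefficients are products of
factors `1 - q^(n - i)`.
-/

open HahnSeries
open scoped LaurentSeries Polynomial

theorem Int.units_mul_units_mul (s : ℤˣ) (n : ℤ) : (s : ℤ) * (s * n) = n := by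
  rw [← mul_assoc, ← Units.val_mul, Int.units_mul_self, Units.val_one, one_mul]

theorem zpow_units_zpow_mul {G : Type*} [Group G] (v : G) (s : ℤˣ) (m : ℤ) :
    (v ^ (s : ℤ)) ^ ((s : ℤ) * m) = v ^ m := by
  rw [← zpow_mul, Int.units_mul_units_mul]

theorem Finset.mul_prod_Ico_eq_mul_prod_Ico_add_one {M : Type*} [CommMonoid M] (g : ℤ → M)
    {t m : ℤ} (h : t ≤ m) :
    g m * ∏ i ∈ Finset.Ico t m, g i = g t * ∏ i ∈ Finset.Ico t m, g (i + 1) := by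
  induction m, h using Int.leInduction with
  | base => simp
  | succ m hm ih =>
    have hIco : Finset.Ico t (m + 1) = insert m (Finset.Ico t m) := by
      ext; simp only [Finset.mem_Ico, Finset.mem_insert]; omega
    have hm' : m ∉ Finset.Ico t m := by simp
    rw [hIco, Finset.prod_insert hm', Finset.prod_insert hm', ih]
    ac_rfl

namespace LaurentSeries

variable {A : Type*} [CommRing A]

theorem algebraMap_eq_C (r : A) : algebraMap A A⸨X⸩ r = HahnSeries.C r := by
  rw [HahnSeries.algebraMap_apply', PowerSeries.algebraMap_apply, Algebra.algebraMap_self_apply,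
    HahnSeries.ofPowerSeries_C]

def dilateSeries (u : Aˣ) (f : A⸨X⸩) : A⸨X⸩ :=
  ⟨fun n => ↑(u ^ n) * f.coeff n, f.isPWO_support.mono fun n hn h => hn (by
    simp only [h, mul_zero])⟩

@[simp]
theorem coeff_dilateSeries (u : Aˣ) (f : A⸨X⸩) (n : ℤ) :
    (dilateSeries u f).coeff n = ↑(u ^ n) * f.coeff n := rfl

theorem support_dilateSeries (u : Aˣ) (f : A⸨X⸩) : (dilateSeries u f).support = f.support := by
  ext n
  simp [Units.mul_right_eq_zero]

theorem dilateSeries_mul (u : Aˣ) (f g : A⸨X⸩) :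
    dilateSeries u (f * g) = dilateSeries u f * dilateSeries u g := by
  ext n
  have hsupp : Finset.antidiagonal (dilateSeries u f).isPWO_support
      (dilateSeries u g).isPWO_support n =
        Finset.antidiagonal f.isPWO_support g.isPWO_support n := by
    ext; simp only [Finset.mem_antidiagonal, support_dilateSeries]
  rw [coeff_dilateSeries, coeff_mul, coeff_mul, hsupp, Finset.mul_sum]
  refine Finset.sum_congr rfl fun ij hij => ?_
  rw [← (Finset.mem_antidiagonal.mp hij).2.2]
  simp only [coeff_dilateSeries, zpow_add, Units.val_mul]
  ring

/-- The substitution `f(x) ↦ f(u x)`. -/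
def dilate (u : Aˣ) : A⸨X⸩ →ₐ[A] A⸨X⸩ where
  toFun := dilateSeries u
  map_zero' := by ext; simp
  map_one' := by ext n; by_cases h : n = 0 <;> simp [HahnSeries.coeff_one, h]
  map_add' f g := by ext; simp [mul_add]
  map_mul' := dilateSeries_mul u
  commutes' r := by
    rw [algebraMap_eq_C]
    ext n
    by_cases h : n = 0 <;> simp [h]

@[simp]
theorem coeff_dilate (u : Aˣ) (f : A⸨X⸩) (n : ℤ) :
    (dilate u f).coeff n = ↑(u ^ n) * f.coeff n := rfl

theorem dilate_single (u : Aˣ) (n : ℤ) (r : A) :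
    dilate u (single n r) = single n (↑(u ^ n) * r) := by
  ext m
  by_cases h : m = n <;> simp [h]

end LaurentSeries

section Expansion

variable {K : Type*} [Field K]

theorem coeff_aeval_single_mul (s : ℤˣ) (P : K[X]) (k : ℕ) :
    (Polynomial.aeval (single (s : ℤ) (1 : K)) P).coeff (k * s) = P.coeff k := by
  induction P using Polynomial.induction_on' with
  | add P Q hP hQ => simp [hP, hQ]
  | monomial n c =>
    rw [Polynomial.aeval_monomial, single_pow, one_pow, LaurentSeries.algebraMap_eq_C,
      HahnSeries.C_apply, single_mul_single, zero_add, mul_one, coeff_single,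
      Polynomial.coeff_monomial]
    by_cases h : n = k
    · simp [h]
    · simp [h, Ne.symm h]

theorem aeval_single_injective (s : ℤˣ) :
    Function.Injective (Polynomial.aeval (R := K) (single (s : ℤ) (1 : K))) := by
  refine (injective_iff_map_eq_zero _).mpr fun P hP => Polynomial.ext fun k => ?_
  rw [← coeff_aeval_single_mul s, hP, HahnSeries.coeff_zero, Polynomial.coeff_zero]

/-- The substitution `x ↦ X ^ s`: `laurentExpansion 1` is the expansion at `0`, and
`laurentExpansion (-1)` is the expansion at `∞`, carrying the coefficient of `xⁿ` at index `-n`. -/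
def laurentExpansion (s : ℤˣ) : RatFunc K →ₐ[K] K⸨X⸩ :=
  RatFunc.liftAlgHom (Polynomial.aeval (single (s : ℤ) 1))
    (nonZeroDivisors_le_comap_nonZeroDivisors_of_injective _ (aeval_single_injective s))

theorem laurentExpansion_injective (s : ℤˣ) :
    Function.Injective (laurentExpansion (K := K) s) :=
  (laurentExpansion s).toRingHom.injective

theorem laurentExpansion_algebraMap (s : ℤˣ) (P : K[X]) :
    laurentExpansion s (algebraMap K[X] (RatFunc K) P) =
      Polynomial.aeval (single (s : ℤ) 1) P := by
  rw [laurentExpansion, RatFunc.liftAlgHom_apply, RatFunc.num_algebraMap,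
    RatFunc.denom_algebraMap, Polynomial.aeval_one, div_one]

theorem laurentExpansion_C (s : ℤˣ) (r : K) :
    laurentExpansion s (RatFunc.C r) = HahnSeries.C r := by
  rw [← RatFunc.algebraMap_eq_C, AlgHom.commutes, LaurentSeries.algebraMap_eq_C]

theorem laurentExpansion_X (s : ℤˣ) :
    laurentExpansion s (RatFunc.X : RatFunc K) = single (s : ℤ) 1 := by
  rw [← RatFunc.algebraMap_X, laurentExpansion_algebraMap, Polynomial.aeval_X]

theorem laurentExpansion_zpow_X (s : ℤˣ) (j : ℤ) :
    laurentExpansion s (RatFunc.X ^ j : RatFunc K) = single (s * j) 1 := by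
  rw [map_zpow₀, laurentExpansion_X]
  rcases Int.eq_nat_or_neg j with ⟨n, rfl | rfl⟩ <;> simp [single_pow, mul_comm]

theorem laurentExpansion_ratSubst (s : ℤˣ) {q : K} {v : Kˣ} (hv : ((v ^ (s : ℤ) : Kˣ) : K) = q)
    (y : RatFunc K) :
    laurentExpansion s (ratSubst q y) = LaurentSeries.dilate v (laurentExpansion s y) := by
  have hcomp : ∀ P : K[X],
      Polynomial.aeval (single (s : ℤ) (1 : K)) (P.comp (Polynomial.C q * Polynomial.X)) =
        LaurentSeries.dilate v (Polynomial.aeval (single (s : ℤ) 1) P) := by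
    intro P
    rw [Polynomial.aeval_comp, ← Polynomial.aeval_algHom_apply, LaurentSeries.dilate_single]
    simp [hv, LaurentSeries.algebraMap_eq_C, HahnSeries.C_apply, single_mul_single]
  rw [ratSubst, map_div₀, laurentExpansion_algebraMap, laurentExpansion_algebraMap, hcomp, hcomp,
    ← map_div₀, ← laurentExpansion_algebraMap, ← laurentExpansion_algebraMap, ← map_div₀,
    RatFunc.num_div_denom]

theorem coeff_laurentExpansion_smul (s : ℤˣ) (r : K) (y : RatFunc K) (n : ℤ) :
    (laurentExpansion s (r • y)).coeff n = r * (laurentExpansion s y).coeff n := by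
  rw [Algebra.smul_def, map_mul, AlgHom.commutes, LaurentSeries.algebraMap_eq_C,
    HahnSeries.C_apply, coeff_single_mul, sub_zero]

theorem coeff_laurentExpansion_sum_smul_zpow (s : ℤˣ) (S : Finset ℤ) (w : ℤ → K) (n : ℤ) :
    (laurentExpansion s (∑ j ∈ S, w j • RatFunc.X ^ j)).coeff (s * n) =
      if n ∈ S then w n else 0 := by
  simp only [map_sum, HahnSeries.coeff_sum, coeff_laurentExpansion_smul, laurentExpansion_zpow_X,
    coeff_single]
  simp

theorem eq_sum_smul_zpow_of_coeff_laurentExpansion (s : ℤˣ) (y : RatFunc K) (S : Finset ℤ)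
    (h : ∀ n ∉ S, (laurentExpansion s y).coeff (s * n) = 0) :
    y = ∑ n ∈ S, (laurentExpansion s y).coeff (s * n) • RatFunc.X ^ n := by
  refine laurentExpansion_injective s (HahnSeries.ext (funext fun m => ?_))
  obtain ⟨n, rfl⟩ : ∃ n, m = s * n := ⟨s * m, (Int.units_mul_units_mul s m).symm⟩
  rw [coeff_laurentExpansion_sum_smul_zpow]
  split_ifs with hn
  · rfl
  · exact h n hn

theorem exists_coeff_laurentExpansion_one_eq_zero {y : RatFunc K} {m : ℤ}
    (h : ∀ n < m, (laurentExpansion (-1) y).coeff (-n) = 0) :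
    ∃ N, ∀ n, N < n → (laurentExpansion 1 y).coeff n = 0 := by
  set f := laurentExpansion (-1) y
  have hy := eq_sum_smul_zpow_of_coeff_laurentExpansion (-1) y (Finset.Icc m (-f.order))
    fun n hn => by
      rw [Finset.mem_Icc, not_and_or, not_le, not_le] at hn
      rw [Units.val_neg, Units.val_one, neg_one_mul]
      rcases hn with hn | hn
      · exact h n hn
      · exact HahnSeries.coeff_eq_zero_of_lt_order (show -n < f.order by omega)
  refine ⟨-f.order, fun n hn => ?_⟩
  have := coeff_laurentExpansion_sum_smul_zpow 1 (Finset.Icc m (-f.order))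
    (fun n => f.coeff ((-1 : ℤˣ) * n)) n
  rw [Units.val_one, one_mul, if_neg (by rw [Finset.mem_Icc]; omega)] at this
  rw [hy]
  exact this

theorem linearIndependent_of_coeff_laurentExpansion {u v : RatFunc K} {m₁ m₂ : ℤ}
    (hu₁ : (laurentExpansion 1 u).coeff m₁ ≠ 0) (hu₂ : (laurentExpansion 1 u).coeff m₂ = 0)
    (hv₂ : (laurentExpansion 1 v).coeff m₂ ≠ 0) : LinearIndependent K ![u, v] := by
  refine LinearIndependent.pair_iff.mpr fun s t h => ?_
  have hcoeff : ∀ m,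
      s * (laurentExpansion 1 u).coeff m + t * (laurentExpansion 1 v).coeff m = 0 := fun m => by
    simpa [coeff_laurentExpansion_smul] using congrArg (fun y => (laurentExpansion 1 y).coeff m) h
  have ht : t = 0 := by simpa [hu₂, hv₂] using hcoeff m₂
  exact ⟨by simpa [ht, hu₁] using hcoeff m₁, ht⟩

theorem coeff_laurentExpansion_one_sub_X_inv (n : ℤ) :
    (laurentExpansion 1 (1 - RatFunc.X : RatFunc K)⁻¹).coeff n = if 0 ≤ n then 1 else 0 := by
  have hgeom : (1 - single 1 1 : K⸨X⸩) * ofPowerSeries ℤ K (PowerSeries.mk 1) = 1 := by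
    rw [← ofPowerSeries_X, ← map_one (ofPowerSeries ℤ K), ← map_sub, ← map_mul, mul_comm,
      PowerSeries.mk_one_mul_one_sub_eq_one, map_one]
  rw [map_inv₀, map_sub, map_one, laurentExpansion_X, Units.val_one,
    inv_eq_of_mul_eq_one_right hgeom, PowerSeries.coeff_coe, PowerSeries.coeff_mk]
  by_cases h : 0 ≤ n <;> simp [h]

/-- Starting from `xⁿ⁰ / (1 - x)`, each factor `1 - q ^ (n - i)` is produced by
`y ↦ y - q⁻ⁱ y(qx)`. -/
theorem exists_coeff_laurentExpansion_eq_prod {q : K} (hq0 : q ≠ 0) (n₀ : ℤ) (M : Multiset ℤ) :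
    ∃ y : RatFunc K, ∀ n, (laurentExpansion 1 y).coeff n =
      if n₀ ≤ n then (M.map fun i => 1 - q ^ (n - i)).prod else 0 := by
  induction M using Multiset.induction_on with
  | empty =>
    refine ⟨RatFunc.X ^ n₀ * (1 - RatFunc.X)⁻¹, fun n => ?_⟩
    rw [map_mul, laurentExpansion_zpow_X, coeff_single_mul, coeff_laurentExpansion_one_sub_X_inv]
    simp
  | cons i M ih =>
    obtain ⟨y, hy⟩ := ih
    refine ⟨y - (q ^ i)⁻¹ • ratSubst q y, fun n => ?_⟩
    rw [map_sub, HahnSeries.coeff_sub, coeff_laurentExpansion_smul,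
      laurentExpansion_ratSubst 1 (v := Units.mk0 q hq0) (by simp), LaurentSeries.coeff_dilate, hy]
    split_ifs
    · simp only [Multiset.map_cons, Multiset.prod_cons, Units.val_zpow_eq_zpow_val, Units.val_mk0,
        zpow_sub₀ hq0, div_eq_mul_inv]
      ring
    · simp

end Expansion

def termRatioNum (q a b : ℂ) (n : ℤ) : ℂ := (1 - a * q ^ (n - 1)) * (1 - b * q ^ (n - 1))

def termRatioDen (q c : ℂ) (n : ℤ) : ℂ := (1 - q ^ n) * (1 - c * q ^ (n - 1))

def IsHypergeometricSeq (q a b c : ℂ) (w : ℤ → ℂ) : Prop :=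
  ∀ n, termRatioDen q c n * w n = termRatioNum q a b n * w (n - 1)

section Recurrence

variable {q a b c : ℂ}

theorem basicHypergeometricEq_iff_isHypergeometricSeq (hq0 : q ≠ 0) (s : ℤˣ) (y : RatFunc ℂ) :
    basicHypergeometricEq q a b c y ↔
      IsHypergeometricSeq q a b c fun n => (laurentExpansion s y).coeff (s * n) := by
  set u := Units.mk0 q hq0
  set f := laurentExpansion s y
  have hsubst : ∀ {r : ℂ} (v : ℂˣ), (v : ℂ) = r →
      laurentExpansion s (ratSubst r y) = LaurentSeries.dilate (v ^ (s : ℤ)) f := fun v hv =>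
    laurentExpansion_ratSubst s (by
      rw [← zpow_mul, ← Units.val_mul, Int.units_mul_self, Units.val_one, zpow_one, hv]) y
  have hcoeff : ∀ n, (laurentExpansion s
      ((RatFunc.C (a * b) * RatFunc.X - RatFunc.C (c * q⁻¹)) * ratSubst (q ^ 2) y
        - (RatFunc.C (a + b) * RatFunc.X - RatFunc.C (1 + c * q⁻¹)) * ratSubst q y
        + (RatFunc.X - 1) * y)).coeff (s * n) =
      termRatioNum q a b n * f.coeff (s * (n - 1)) - termRatioDen q c n * f.coeff (s * n) := by
    intro n
    simp only [map_add, map_sub, map_mul, map_one, laurentExpansion_C, laurentExpansion_X,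
      hsubst (r := q) u rfl, hsubst (r := q ^ 2) (u ^ 2) (by simp [u])]
    simp only [sub_mul, add_mul, mul_assoc, HahnSeries.coeff_add, HahnSeries.coeff_sub,
      HahnSeries.C_apply, coeff_single_mul, sub_zero, one_mul, LaurentSeries.coeff_dilate]
    rw [show (s : ℤ) * n - s = s * (n - 1) by ring, zpow_units_zpow_mul, zpow_units_zpow_mul,
      zpow_units_zpow_mul, zpow_units_zpow_mul]
    simp only [Units.val_zpow_eq_zpow_val, Units.val_mul, Units.val_mk0, u, sq, mul_zpow,
      termRatioNum, termRatioDen, zpow_sub_one₀ hq0, f]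
    field_simp
    ring
  rw [basicHypergeometricEq, ← (laurentExpansion_injective s).eq_iff, map_zero]
  refine ⟨fun h n => ?_, fun h => HahnSeries.ext (funext fun m => ?_)⟩
  · have := hcoeff n
    rw [h, HahnSeries.coeff_zero] at this
    linear_combination this
  · obtain ⟨n, rfl⟩ : ∃ n, m = s * n := ⟨s * m, (Int.units_mul_units_mul s m).symm⟩
    rw [hcoeff, h n, HahnSeries.coeff_zero]
    ring

theorem basicHypergeometricEq_iff_coeff (hq0 : q ≠ 0) (y : RatFunc ℂ) :
    basicHypergeometricEq q a b c y ↔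
      IsHypergeometricSeq q a b c (laurentExpansion 1 y).coeff := by
  simpa using basicHypergeometricEq_iff_isHypergeometricSeq hq0 1 y

theorem isHypergeometricSeq_coeff_infty (hq0 : q ≠ 0) {y : RatFunc ℂ}
    (hy : basicHypergeometricEq q a b c y) :
    IsHypergeometricSeq q a b c fun n => (laurentExpansion (-1) y).coeff (-n) := by
  simpa using (basicHypergeometricEq_iff_isHypergeometricSeq hq0 (-1) y).mp hy

theorem basicHypergeometricEq_comm {y : RatFunc ℂ} :
    basicHypergeometricEq q a b c y ↔ basicHypergeometricEq q b a c y := by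
  rw [basicHypergeometricEq, basicHypergeometricEq, mul_comm a b, add_comm a b]

end Recurrence

section Sequences

variable {q a b c : ℂ} {w : ℤ → ℂ}

theorem IsHypergeometricSeq.exists_termRatioNum_eq_zero_of_ne_zero_of_eq_zero
    (hw : IsHypergeometricSeq q a b c w) {m m' : ℤ} (hm : m < m') (h : w m ≠ 0)
    (h' : w m' = 0) : ∃ k, m < k ∧ k ≤ m' ∧ termRatioNum q a b k = 0 := by
  by_contra! hnum
  have hne : ∀ n, m ≤ n → n ≤ m' → w n ≠ 0 := by
    intro n hn
    induction n, hn using Int.leInduction with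
    | base => exact fun _ => h
    | succ n hn ih =>
      intro hn' h0
      have := hw (n + 1)
      rw [h0, mul_zero, add_sub_cancel_right] at this
      exact mul_ne_zero (hnum (n + 1) (by omega) hn') (ih (by omega)) this.symm
  exact hne m' hm.le le_rfl h'

theorem IsHypergeometricSeq.eq_zero_of_lt (hw : IsHypergeometricSeq q a b c w) {m : ℤ}
    (hden : termRatioDen q c m = 0) (hnum : ∀ k ≤ m, termRatioNum q a b k ≠ 0) :
    ∀ n < m, w n = 0 := by
  suffices h : ∀ n ≤ m, w (n - 1) = 0 from fun n hn => by simpa using h (n + 1) (by omega)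
  intro n hn
  induction n, hn using Int.leInductionDown with
  | base =>
    have := hw m
    rw [hden, zero_mul] at this
    exact (mul_eq_zero.mp this.symm).resolve_left (hnum m le_rfl)
  | pred n hn ih =>
    have := hw (n - 1)
    rw [ih, mul_zero] at this
    exact (mul_eq_zero.mp this.symm).resolve_left (hnum _ (by omega))

theorem termRatioDen_order_eq_zero {f : ℂ⸨X⸩} (hf : f ≠ 0)
    (h : IsHypergeometricSeq q a b c f.coeff) : termRatioDen q c f.order = 0 := by
  have hlow : f.coeff (f.order - 1) = 0 := HahnSeries.coeff_eq_zero_of_lt_order (by omega)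
  have := h f.order
  rw [hlow, mul_zero] at this
  exact (mul_eq_zero.mp this).resolve_right (coeff_order_eq_zero.not.mpr hf)

def hypergeometricTerm (q a b c : ℂ) (m n : ℤ) : ℂ :=
  ∏ k ∈ Finset.Ioc m n, termRatioNum q a b k / termRatioDen q c k

theorem hypergeometricTerm_self (m : ℤ) : hypergeometricTerm q a b c m m = 1 := by
  simp [hypergeometricTerm]

theorem hypergeometricTerm_of_lt {m n : ℤ} (h : m < n) :
    hypergeometricTerm q a b c m n =
      hypergeometricTerm q a b c m (n - 1) * (termRatioNum q a b n / termRatioDen q c n) := by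
  have hIoc : Finset.Ioc m n = insert n (Finset.Ioc m (n - 1)) := by
    ext; simp only [Finset.mem_Ioc, Finset.mem_insert]; omega
  rw [hypergeometricTerm, hIoc, Finset.prod_insert (by simp), mul_comm, hypergeometricTerm]

theorem isHypergeometricSeq_indicator_Ico {m t : ℤ} (hm : termRatioDen q c m = 0)
    (hden : ∀ k, m < k → k < t → termRatioDen q c k ≠ 0) (ht : termRatioNum q a b t = 0) :
    IsHypergeometricSeq q a b c fun n =>
      if n ∈ Finset.Ico m t then hypergeometricTerm q a b c m n else 0 := by
  intro n
  simp only [Finset.mem_Ico]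
  split_ifs with h₁ h₂ h₂
  · rw [hypergeometricTerm_of_lt (by omega), mul_div_assoc',
      mul_div_cancel₀ _ (hden n (by omega) h₁.2)]
    ring
  · obtain rfl : n = m := by omega
    rw [hm, zero_mul, mul_zero]
  · obtain rfl : n = t := by omega
    rw [ht, zero_mul, mul_zero]
  · rw [mul_zero, mul_zero]

end Sequences

section Solutions

variable {q a b c : ℂ}

theorem basicHypergeometricEq_linearCombination (hq0 : q ≠ 0) {ι : Type*} [Fintype ι]
    {v : ι → RatFunc ℂ} (hv : ∀ i, basicHypergeometricEq q a b c (v i)) (w : ι → ℂ) :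
    basicHypergeometricEq q a b c (Fintype.linearCombination ℂ v w) := by
  simp only [basicHypergeometricEq_iff_coeff hq0] at hv ⊢
  intro n
  simp only [Fintype.linearCombination_apply, map_sum, HahnSeries.coeff_sum,
    coeff_laurentExpansion_smul, Finset.mul_sum]
  exact Finset.sum_congr rfl fun i _ => by linear_combination w i * hv i n

theorem eq_zero_of_coeff_eq_zero_of_termRatioDen_eq_zero (hq0 : q ≠ 0) {y : RatFunc ℂ}
    (hy : basicHypergeometricEq q a b c y)
    (h : ∀ n, termRatioDen q c n = 0 → (laurentExpansion 1 y).coeff n = 0) : y = 0 := by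
  by_contra hy0
  have hf : laurentExpansion 1 y ≠ 0 :=
    (map_ne_zero_iff _ (laurentExpansion_injective 1)).mpr hy0
  exact coeff_order_eq_zero.not.mpr hf
    (h _ (termRatioDen_order_eq_zero hf ((basicHypergeometricEq_iff_coeff hq0 y).mp hy)))

/-- A solution whose coefficients vanish at all zeros of `termRatioDen` is zero, so the coefficient
map at `m₁, m₂` is injective on `span {y₁, y₂} ≅ ℂ²`, hence onto. -/
theorem exists_basicHypergeometricEq_coeff_eq (hq0 : q ≠ 0) {y₁ y₂ : RatFunc ℂ}
    (hy₁ : basicHypergeometricEq q a b c y₁) (hy₂ : basicHypergeometricEq q a b c y₂)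
    (hli : LinearIndependent ℂ ![y₁, y₂]) {m₁ m₂ : ℤ}
    (hden : ∀ n, termRatioDen q c n = 0 → n = m₁ ∨ n = m₂) (v₁ v₂ : ℂ) :
    ∃ y, basicHypergeometricEq q a b c y ∧
      (laurentExpansion 1 y).coeff m₁ = v₁ ∧ (laurentExpansion 1 y).coeff m₂ = v₂ := by
  have hsol : ∀ w, basicHypergeometricEq q a b c (Fintype.linearCombination ℂ ![y₁, y₂] w) :=
    basicHypergeometricEq_linearCombination hq0 (fun i => by fin_cases i <;> assumption)
  let coeffs : RatFunc ℂ →ₗ[ℂ] Fin 2 → ℂ :=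
    { toFun y := ![(laurentExpansion 1 y).coeff m₁, (laurentExpansion 1 y).coeff m₂]
      map_add' y z := by ext i; fin_cases i <;> simp
      map_smul' r y := by ext i; fin_cases i <;> simp [coeff_laurentExpansion_smul] }
  have hinj : Function.Injective (coeffs ∘ₗ Fintype.linearCombination ℂ ![y₁, y₂]) := by
    refine (injective_iff_map_eq_zero _).mpr fun w hw => ?_
    refine linearIndependent_iff_injective_fintypeLinearCombination.mp hli ?_
    rw [map_zero]
    refine eq_zero_of_coeff_eq_zero_of_termRatioDen_eq_zero hq0 (hsol w) fun n hn => ?_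
    rcases hden n hn with rfl | rfl
    · exact congrFun hw 0
    · exact congrFun hw 1
  obtain ⟨w, hw⟩ := LinearMap.injective_iff_surjective.mp hinj ![v₁, v₂]
  exact ⟨_, hsol w, congrFun hw 0, congrFun hw 1⟩

end Solutions

section PowersOfQ

variable {q : ℂ}

theorem zpow_eq_one_iff_of_not_isOfFinOrder (hq : ¬IsOfFinOrder q) {n : ℤ} :
    q ^ n = 1 ↔ n = 0 :=
  ⟨fun h => by_contra fun hn => hq (isOfFinOrder_iff_zpow_eq_one.mpr ⟨n, hn, h⟩),
    fun h => h ▸ zpow_zero q⟩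

theorem zpow_injective_of_not_isOfFinOrder (hq0 : q ≠ 0) (hq : ¬IsOfFinOrder q) :
    Function.Injective fun n : ℤ => q ^ n := fun m n h => by
  have : q ^ (m - n) = 1 := by
    rw [zpow_sub₀ hq0, div_eq_one_iff_eq (zpow_ne_zero n hq0)]
    exact h
  linarith [(zpow_eq_one_iff_of_not_isOfFinOrder hq).mp this]

theorem one_sub_zpow_sub_eq_zero_iff (hq : ¬IsOfFinOrder q) {n m : ℤ} :
    1 - q ^ (n - m) = 0 ↔ n = m := by
  rw [sub_eq_zero, eq_comm, zpow_eq_one_iff_of_not_isOfFinOrder hq, sub_eq_zero]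

theorem eq_zpow_of_mul_zpow_eq_one {r : ℂ} {n : ℤ} (h : r * q ^ (n - 1) = 1) :
    r = q ^ (1 - n) := by
  rw [eq_inv_of_mul_eq_one_left h, ← zpow_neg, neg_sub]

theorem termRatioNum_eq_zero {a b : ℂ} {n : ℤ} (h : termRatioNum q a b n = 0) :
    a = q ^ (1 - n) ∨ b = q ^ (1 - n) := by
  rcases mul_eq_zero.mp h with h | h
  · exact .inl (eq_zpow_of_mul_zpow_eq_one (sub_eq_zero.mp h).symm)
  · exact .inr (eq_zpow_of_mul_zpow_eq_one (sub_eq_zero.mp h).symm)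

theorem termRatioDen_eq_zero {c : ℂ} {n : ℤ} (h : termRatioDen q c n = 0) :
    q ^ n = 1 ∨ c = q ^ (1 - n) := by
  rcases mul_eq_zero.mp h with h | h
  · exact .inl (sub_eq_zero.mp h).symm
  · exact .inr (eq_zpow_of_mul_zpow_eq_one (sub_eq_zero.mp h).symm)

theorem termRatioNum_eq_zero_of_ne {a b : ℂ} (hq0 : q ≠ 0) (hq : ¬IsOfFinOrder q) {k₁ k₂ : ℤ}
    (hk : k₁ ≠ k₂) (h₁ : termRatioNum q a b k₁ = 0) (h₂ : termRatioNum q a b k₂ = 0) :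
    a = q ^ (1 - k₁) ∧ b = q ^ (1 - k₂) ∨ a = q ^ (1 - k₂) ∧ b = q ^ (1 - k₁) := by
  have hinj : ∀ {r : ℂ}, r = q ^ (1 - k₁) → r = q ^ (1 - k₂) → False := fun h h' =>
    hk (by have := zpow_injective_of_not_isOfFinOrder hq0 hq (h.symm.trans h'); omega)
  rcases termRatioNum_eq_zero h₁ with h₁ | h₁ <;> rcases termRatioNum_eq_zero h₂ with h₂ | h₂
  · exact (hinj h₁ h₂).elim
  · exact .inl ⟨h₁, h₂⟩
  · exact .inr ⟨h₂, h₁⟩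
  · exact (hinj h₁ h₂).elim

theorem termRatioNum_zpow (hq0 : q ≠ 0) (α β n : ℤ) :
    termRatioNum q (q ^ α) (q ^ β) n = (1 - q ^ (n - (1 - α))) * (1 - q ^ (n - (1 - β))) := by
  simp only [termRatioNum, ← zpow_add₀ hq0]
  ring_nf

theorem termRatioDen_zpow (hq0 : q ≠ 0) (γ n : ℤ) :
    termRatioDen q (q ^ γ) n =
      (1 - q ^ (n - min 0 (1 - γ))) * (1 - q ^ (n - max 0 (1 - γ))) := by
  simp only [termRatioDen, ← zpow_add₀ hq0]
  rcases le_total 0 (1 - γ) with h | h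
  · rw [min_eq_left h, max_eq_right h]
    ring_nf
  · rw [min_eq_right h, max_eq_left h]
    ring_nf

theorem termRatioDen_zpow_eq_zero_iff (hq0 : q ≠ 0) (hq : ¬IsOfFinOrder q) (γ n : ℤ) :
    termRatioDen q (q ^ γ) n = 0 ↔ n = min 0 (1 - γ) ∨ n = max 0 (1 - γ) := by
  rw [termRatioDen_zpow hq0, mul_eq_zero, one_sub_zpow_sub_eq_zero_iff hq,
    one_sub_zpow_sub_eq_zero_iff hq]

end PowersOfQ

/-- The interval between the two zeros `0` and `1 - γ` of `termRatioDen q (q ^ γ)`. -/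
def zeroWindow (γ : ℤ) : Set ℤ := Set.Ioc (min 0 (1 - γ)) (max 0 (1 - γ))

theorem zSet_conditions_iff (α β γ : ℤ) :
    ((α, α + 1 - γ) ∈ zSet ∨ (β, β + 1 - γ) ∈ zSet) ∧
        ((α, β) ∈ zSet ∨ (α + 1 - γ, β + 1 - γ) ∈ zSet) ↔
      Xor (1 - α ∈ zeroWindow γ) (1 - β ∈ zeroWindow γ) := by
  simp only [zSet, zeroWindow, Set.mem_ofPred_eq, Set.mem_Ioc, Xor]
  omega

section Forward

variable {q a b c : ℂ}

/-- If the expansion at `0` never stops after `m₂`, then `y` is not a Laurent polynomial, so its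
expansion at `∞` cannot stop below `m₁`; read downwards from `m₁`, the recurrence then needs a
zero of `termRatioNum` at or below `m₁`. -/
theorem exists_termRatioNum_eq_zero_of_coeff_ne_zero (hq0 : q ≠ 0) {y : RatFunc ℂ}
    (hy : basicHypergeometricEq q a b c y) {m₁ m₂ : ℤ} (hden : termRatioDen q c m₁ = 0)
    (hy₂ : (laurentExpansion 1 y).coeff m₂ ≠ 0) :
    ∃ k, (k ≤ m₁ ∨ m₂ < k) ∧ termRatioNum q a b k = 0 := by
  by_cases hterm : ∃ n, m₂ < n ∧ (laurentExpansion 1 y).coeff n = 0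
  · obtain ⟨n, hn, hn0⟩ := hterm
    obtain ⟨k, hk, -, hk0⟩ := ((basicHypergeometricEq_iff_coeff hq0 y).mp hy
      ).exists_termRatioNum_eq_zero_of_ne_zero_of_eq_zero hn hy₂ hn0
    exact ⟨k, .inr hk, hk0⟩
  · by_contra! hnum
    simp only [not_exists, not_and] at hterm
    obtain ⟨N, hN⟩ := exists_coeff_laurentExpansion_one_eq_zero
      ((isHypergeometricSeq_coeff_infty hq0 hy).eq_zero_of_lt hden fun k hk => hnum k (.inl hk))
    exact hterm (max N m₂ + 1) (by omega) (hN _ (by omega))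

theorem exists_eq_zpow_ne_one_of_linearIndependent (hq0 : q ≠ 0) (hq : ¬IsOfFinOrder q)
    {y₁ y₂ : RatFunc ℂ} (hy₁ : basicHypergeometricEq q a b c y₁)
    (hy₂ : basicHypergeometricEq q a b c y₂) (hli : LinearIndependent ℂ ![y₁, y₂]) :
    ∃ γ : ℤ, c = q ^ γ ∧ γ ≠ 1 := by
  by_contra! hc
  have hden : ∀ n, termRatioDen q c n = 0 → n = 0 ∨ n = 0 := fun n hn => by
    rcases termRatioDen_eq_zero hn with h | h
    · exact .inl ((zpow_eq_one_iff_of_not_isOfFinOrder hq).mp h)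
    · exact .inl (by have := hc _ h; omega)
  obtain ⟨y, -, h₁, h₀⟩ := exists_basicHypergeometricEq_coeff_eq hq0 hy₁ hy₂ hli hden 1 0
  exact one_ne_zero (h₁.symm.trans h₀)

theorem exists_zpow_of_linearIndependent (hq0 : q ≠ 0) (hq : ¬IsOfFinOrder q)
    {y₁ y₂ : RatFunc ℂ} (hy₁ : basicHypergeometricEq q a b c y₁)
    (hy₂ : basicHypergeometricEq q a b c y₂) (hli : LinearIndependent ℂ ![y₁, y₂]) :
    ∃ α β γ : ℤ, a = q ^ α ∧ b = q ^ β ∧ c = q ^ γ ∧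
      Xor (1 - α ∈ zeroWindow γ) (1 - β ∈ zeroWindow γ) := by
  obtain ⟨γ, rfl, hγ⟩ := exists_eq_zpow_ne_one_of_linearIndependent hq0 hq hy₁ hy₂ hli
  have hden := termRatioDen_zpow_eq_zero_iff hq0 hq γ
  obtain ⟨u, hu, hu₁, hu₂⟩ :=
    exists_basicHypergeometricEq_coeff_eq hq0 hy₁ hy₂ hli (fun n => (hden n).mp) 1 0
  obtain ⟨v, hv, -, hv₂⟩ :=
    exists_basicHypergeometricEq_coeff_eq hq0 hy₁ hy₂ hli (fun n => (hden n).mp) 0 1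
  obtain ⟨k₁, hk₁, hk₁', hA₁⟩ := ((basicHypergeometricEq_iff_coeff hq0 u).mp hu
    ).exists_termRatioNum_eq_zero_of_ne_zero_of_eq_zero
      (show min 0 (1 - γ) < max 0 (1 - γ) by omega) (by rw [hu₁]; exact one_ne_zero) hu₂
  obtain ⟨k₂, hk₂, hA₂⟩ := exists_termRatioNum_eq_zero_of_coeff_ne_zero hq0 hv
    ((hden _).mpr (.inl rfl)) (by rw [hv₂]; exact one_ne_zero)
  rcases termRatioNum_eq_zero_of_ne hq0 hq (by omega) hA₁ hA₂ with ⟨ha, hb⟩ | ⟨ha, hb⟩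
  · refine ⟨1 - k₁, 1 - k₂, γ, ha, hb, rfl, .inl ⟨?_, ?_⟩⟩ <;> simp [zeroWindow] <;> omega
  · refine ⟨1 - k₂, 1 - k₁, γ, ha, hb, rfl, .inr ⟨?_, ?_⟩⟩ <;> simp [zeroWindow] <;> omega

end Forward

section Backward

variable {q a b c : ℂ}

theorem exists_basicHypergeometricEq_coeff_eq_indicator_Ico (hq0 : q ≠ 0) {m t : ℤ}
    (hm : termRatioDen q c m = 0) (hden : ∀ k, m < k → k < t → termRatioDen q c k ≠ 0)
    (ht : termRatioNum q a b t = 0) :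
    ∃ y, basicHypergeometricEq q a b c y ∧ ∀ n, (laurentExpansion 1 y).coeff n =
      if n ∈ Finset.Ico m t then hypergeometricTerm q a b c m n else 0 := by
  have hcoeff := fun n => by
    simpa only [Units.val_one, one_mul] using coeff_laurentExpansion_sum_smul_zpow (1 : ℤˣ)
      (Finset.Ico m t) (hypergeometricTerm q a b c m) n
  refine ⟨_, (basicHypergeometricEq_iff_coeff hq0 _).mpr ?_, hcoeff⟩
  rw [funext hcoeff]
  exact isHypergeometricSeq_indicator_Ico hm hden ht

/-- For `n ≥ m₂` the coefficients are `∏_{z₁ ≤ i < m₂} (1 - q^(n-i)) ∏_{z₂ ≤ i < m₁} (1 - q^(n-i))`;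
passing from `n - 1` to `n` trades the factors `1 - q^(n - zⱼ)` for `1 - q^(n - mⱼ)`. -/
theorem exists_basicHypergeometricEq_coeff_ne_zero (hq0 : q ≠ 0) (hq : ¬IsOfFinOrder q)
    {m₁ m₂ z₁ z₂ : ℤ}
    (hnum : ∀ n, termRatioNum q a b n = (1 - q ^ (n - z₁)) * (1 - q ^ (n - z₂)))
    (hden : ∀ n, termRatioDen q c n = (1 - q ^ (n - m₁)) * (1 - q ^ (n - m₂)))
    (hm : m₁ ≤ m₂) (h₁ : z₁ ≤ m₂) (h₂ : z₂ ≤ m₁) :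
    ∃ y, basicHypergeometricEq q a b c y ∧ (laurentExpansion 1 y).coeff m₂ ≠ 0 := by
  obtain ⟨y, hy⟩ := exists_coeff_laurentExpansion_eq_prod hq0 m₂
    ((Finset.Ico z₁ m₂).val + (Finset.Ico z₂ m₁).val)
  simp only [Multiset.map_add, Multiset.prod_add, Finset.prod_map_val] at hy
  refine ⟨y, (basicHypergeometricEq_iff_coeff hq0 y).mpr fun n => ?_, ?_⟩
  · rw [hy, hy]
    rcases lt_trichotomy n m₂ with h | rfl | h
    · rw [if_neg (by omega), if_neg (by omega), mul_zero, mul_zero]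
    · rw [if_neg (show ¬n ≤ n - 1 by omega), hden]
      simp
    · have t₁ := Finset.mul_prod_Ico_eq_mul_prod_Ico_add_one (fun i => 1 - q ^ (n - i)) h₁
      have t₂ := Finset.mul_prod_Ico_eq_mul_prod_Ico_add_one (fun i => 1 - q ^ (n - i)) h₂
      simp only [sub_add_eq_sub_sub_swap] at t₁ t₂
      rw [if_pos h.le, if_pos (by omega), hden, hnum]
      linear_combination ((1 - q ^ (n - m₁)) * ∏ i ∈ Finset.Ico z₂ m₁, (1 - q ^ (n - i))) * t₁ +
        ((1 - q ^ (n - z₁)) * ∏ i ∈ Finset.Ico z₁ m₂, (1 - q ^ (n - 1 - i))) * t₂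
  · rw [hy, if_pos le_rfl]
    refine mul_ne_zero ?_ ?_ <;>
      refine Finset.prod_ne_zero_iff.mpr fun i hi => ?_ <;>
      rw [Ne, one_sub_zpow_sub_eq_zero_iff hq] <;> simp at hi <;> omega

theorem exists_linearIndependent_of_mem_zeroWindow (hq0 : q ≠ 0) (hq : ¬IsOfFinOrder q)
    {α β γ : ℤ} (hα : 1 - α ∈ zeroWindow γ) (hβ : 1 - β ∉ zeroWindow γ) :
    ∃ y₁ y₂ : RatFunc ℂ, basicHypergeometricEq q (q ^ α) (q ^ β) (q ^ γ) y₁ ∧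
      basicHypergeometricEq q (q ^ α) (q ^ β) (q ^ γ) y₂ ∧ LinearIndependent ℂ ![y₁, y₂] := by
  rw [zeroWindow, Set.mem_Ioc] at hα hβ
  set m₁ := min 0 (1 - γ)
  set m₂ := max 0 (1 - γ)
  have hden : ∀ n, termRatioDen q (q ^ γ) n = 0 ↔ n = m₁ ∨ n = m₂ :=
    termRatioDen_zpow_eq_zero_iff hq0 hq γ
  have hnum : ∀ {k}, k = 1 - α ∨ k = 1 - β → termRatioNum q (q ^ α) (q ^ β) k = 0 := by
    rintro k (rfl | rfl) <;> simp [termRatioNum_zpow hq0]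
  obtain ⟨u, hu, hu'⟩ := exists_basicHypergeometricEq_coeff_eq_indicator_Ico hq0
    ((hden m₁).mpr (.inl rfl)) (fun k hk hk' => by rw [Ne, hden]; omega) (hnum (.inl rfl))
  obtain ⟨v, hv, hv₂⟩ : ∃ v, basicHypergeometricEq q (q ^ α) (q ^ β) (q ^ γ) v ∧
      (laurentExpansion 1 v).coeff m₂ ≠ 0 := by
    rcases lt_or_ge m₂ (1 - β) with h | h
    · obtain ⟨v, hv, hv'⟩ := exists_basicHypergeometricEq_coeff_eq_indicator_Ico hq0
        ((hden m₂).mpr (.inr rfl)) (fun k hk hk' => by rw [Ne, hden]; omega) (hnum (.inr rfl))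
      refine ⟨v, hv, ?_⟩
      rw [hv', if_pos (Finset.mem_Ico.mpr ⟨le_rfl, h⟩), hypergeometricTerm_self]
      exact one_ne_zero
    · exact exists_basicHypergeometricEq_coeff_ne_zero hq0 hq (termRatioNum_zpow hq0 α β)
        (termRatioDen_zpow hq0 γ) (by omega) hα.2 (by omega)
  refine ⟨u, v, hu, hv, linearIndependent_of_coeff_laurentExpansion (m₁ := m₁) ?_ ?_ hv₂⟩
  · rw [hu', if_pos (Finset.mem_Ico.mpr ⟨le_rfl, hα.1⟩), hypergeometricTerm_self]
    exact one_ne_zero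
  · rw [hu', if_neg (by rw [Finset.mem_Ico]; omega)]

end Backward

theorem basic_hypergeometric_rational_solutions_iff_general
    (q : ℂ) (hq0 : q ≠ 0) (hqru : ∀ m : ℕ, 0 < m → q ^ m ≠ 1)
    (a b c : ℂ) :
    (∃ y₁ y₂ : RatFunc ℂ, basicHypergeometricEq q a b c y₁ ∧ basicHypergeometricEq q a b c y₂ ∧
        LinearIndependent ℂ ![y₁, y₂]) ↔
      ∃ α β γ : ℤ, a = q ^ α ∧ b = q ^ β ∧ c = q ^ γ ∧
        ((α, α + 1 - γ) ∈ zSet ∨ (β, β + 1 - γ) ∈ zSet) ∧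
        ((α, β) ∈ zSet ∨ (α + 1 - γ, β + 1 - γ) ∈ zSet) := by
  have hq : ¬IsOfFinOrder q := fun h =>
    let ⟨m, hm, hqm⟩ := isOfFinOrder_iff_pow_eq_one.mp h
    hqru m hm hqm
  simp only [zSet_conditions_iff]
  constructor
  · rintro ⟨y₁, y₂, hy₁, hy₂, hli⟩
    exact exists_zpow_of_linearIndependent hq0 hq hy₁ hy₂ hli
  · rintro ⟨α, β, γ, rfl, rfl, rfl, ⟨hα, hβ⟩ | ⟨hβ, hα⟩⟩
    · exact exists_linearIndependent_of_mem_zeroWindow hq0 hq hα hβ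
    · simpa only [basicHypergeometricEq_comm] using
        exists_linearIndependent_of_mem_zeroWindow hq0 hq hβ hα

/-- The q-analogue of Schwarz's list: rational solutions of the basic hypergeometric
equation. -/
theorem basic_hypergeometric_rational_solutions_iff
    (q : ℂ) (hq0 : q ≠ 0) (hqru : ∀ m : ℕ, 0 < m → q ^ m ≠ 1)
    (a b c : ℂ) (hac : ¬(a = 0 ∧ c = 0)) (hbc : ¬(b = 0 ∧ c = 0)) :
    (∃ y₁ y₂ : RatFunc ℂ, basicHypergeometricEq q a b c y₁ ∧ basicHypergeometricEq q a b c y₂ ∧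
        LinearIndependent ℂ ![y₁, y₂]) ↔
      ∃ α β γ : ℤ, a = q ^ α ∧ b = q ^ β ∧ c = q ^ γ ∧
        ((α, α + 1 - γ) ∈ zSet ∨ (β, β + 1 - γ) ∈ zSet) ∧
        ((α, β) ∈ zSet ∨ (α + 1 - γ, β + 1 - γ) ∈ zSet) :=
  basic_hypergeometric_rational_solutions_iff_general q hq0 hqru a b c
end
end
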